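/- Let G be the 3×3 real matrix with rows (1,1,−1), (1,−1,1), (−1,1,1). For every vector u ∈ [0,1]³ and every sign b ∈ {−1,1}, there exists a vector z ∈ {0,1}³ such that (i) ‖G(u − z)‖_∞ ≤ 4/3, (ii) b · (u₁ + u₂ + u₃ − z₁ − z₂ − z₃) ≥ 0, and (iii) |u₁ + u₂ + u₃ − z₁ − z₂ − z₃| ≤ 2. -/

import Mathlib

/-- The gadget matrix `G` with rows `(1,1,-1)`, `(1,-1,1)`, `(-1,1,1)`. -/
noncomputable def Gmat : Matrix (Fin 3) (Fin 3) ℝ := !![1, 1, -1; 1, -1, 1; -1, 1, 1]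

/-!
Row `i` of `G` is the all-ones row with the entry in column `2 - i` flipped, so
`(G w)ᵢ = Σ w - 2 w_{2-i}` and `‖G w‖_∞ ≤ c` just says `|Σ w - 2 wᵢ| ≤ c` for every `i`.
Replacing `u, z` by `1 - u, 1 - z` negates the error `w = u - z`, which leaves `‖G w‖_∞` and
`|Σ w|` unchanged and flips the sign of `Σ w`; so only the sign `b = 1` needs work. There the
rounding `z` is chosen by comparing `s = Σ u` and the excesses `2uᵢ - s` with a few thresholds.
-/

open Matrix

theorem Gmat_mulVec_apply (w : Fin 3 → ℝ) (i : Fin 3) :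
    (Gmat *ᵥ w) i = ∑ j, w j - 2 * w i.rev := by
  fin_cases i <;> simp [Gmat, mulVec, dotProduct, Fin.sum_univ_three] <;> ring

theorem norm_Gmat_mulVec_le_iff {w : Fin 3 → ℝ} {c : ℝ} (hc : 0 ≤ c) :
    ‖Gmat *ᵥ w‖ ≤ c ↔ ∀ i, |∑ j, w j - 2 * w i| ≤ c := by
  simp only [pi_norm_le_iff_of_nonneg hc, Gmat_mulVec_apply, Real.norm_eq_abs]
  exact (Fin.rev_surjective.forall (p := fun i => |∑ j, w j - 2 * w i| ≤ c)).symm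

def IsGadgetRounding (b : ℝ) (u z : Fin 3 → ℝ) : Prop :=
  (∀ i, z i = 0 ∨ z i = 1) ∧ ‖Gmat *ᵥ (u - z)‖ ≤ 4 / 3 ∧
    0 ≤ b * ∑ i, (u - z) i ∧ |∑ i, (u - z) i| ≤ 2

theorem IsGadgetRounding.one_sub {b : ℝ} {u z : Fin 3 → ℝ} (h : IsGadgetRounding b (1 - u) z) :
    IsGadgetRounding (-b) u (1 - z) := by
  obtain ⟨hz, hnorm, hsign, hsum⟩ := h
  have herr : u - (1 - z) = -((1 - u) - z) := by abel
  have hsum_neg : ∑ i, (u - (1 - z)) i = -∑ i, ((1 - u) - z) i := by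
    rw [herr]; exact Finset.sum_neg_distrib _
  refine ⟨fun i => ?_, ?_, ?_, ?_⟩
  · rcases hz i with h | h <;> simp [h]
  · rwa [herr, mulVec_neg, norm_neg]
  · rwa [hsum_neg, neg_mul_neg]
  · rwa [hsum_neg, abs_neg]

theorem isGadgetRounding_one_of_le {u : Fin 3 → ℝ} {z₀ z₁ z₂ : ℝ}
    (hz₀ : z₀ = 0 ∨ z₀ = 1) (hz₁ : z₁ = 0 ∨ z₁ = 1) (hz₂ : z₂ = 0 ∨ z₂ = 1)
    (h₀ : |(u 1 - z₁) + (u 2 - z₂) - (u 0 - z₀)| ≤ 4 / 3)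
    (h₁ : |(u 0 - z₀) + (u 2 - z₂) - (u 1 - z₁)| ≤ 4 / 3)
    (h₂ : |(u 0 - z₀) + (u 1 - z₁) - (u 2 - z₂)| ≤ 4 / 3)
    (hs₀ : z₀ + z₁ + z₂ ≤ u 0 + u 1 + u 2) (hs₂ : u 0 + u 1 + u 2 ≤ z₀ + z₁ + z₂ + 2) :
    IsGadgetRounding 1 u ![z₀, z₁, z₂] := by
  have hsum : ∑ i, (u - ![z₀, z₁, z₂]) i = u 0 + u 1 + u 2 - (z₀ + z₁ + z₂) := by
    simp [Fin.sum_univ_three]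
  refine ⟨fun i => ?_, (norm_Gmat_mulVec_le_iff (by norm_num)).2 fun i => ?_, ?_, ?_⟩
  · fin_cases i <;> assumption
  · fin_cases i
    · convert h₀ using 2; rw [hsum]; simp; ring
    · convert h₁ using 2; rw [hsum]; simp; ring
    · convert h₂ using 2; rw [hsum]; simp; ring
  · rw [hsum]; linarith
  · rw [hsum]; exact abs_le.2 ⟨by linarith, by linarith⟩

theorem exists_isGadgetRounding_one {u : Fin 3 → ℝ} (hu : ∀ i, u i ∈ Set.Icc (0 : ℝ) 1) :
    ∃ z, IsGadgetRounding 1 u z := by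
  obtain ⟨hu₀, hu₀'⟩ := hu 0
  obtain ⟨hu₁, hu₁'⟩ := hu 1
  obtain ⟨hu₂, hu₂'⟩ := hu 2
  set s := u 0 + u 1 + u 2
  rcases le_or_gt s (4 / 3) with hs | hs
  · use ![0, 0, 0]
    apply isGadgetRounding_one_of_le <;> grind [abs_le]
  rcases le_or_gt (-1 / 3) (2 * u 0 - s) with h₀ | h₀
  · use ![1, 0, 0]
    apply isGadgetRounding_one_of_le <;> grind [abs_le]
  rcases le_or_gt (-1 / 3) (2 * u 1 - s) with h₁ | h₁
  · use ![0, 1, 0]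
    apply isGadgetRounding_one_of_le <;> grind [abs_le]
  rcases le_or_gt (-1 / 3) (2 * u 2 - s) with h₂ | h₂
  · use ![0, 0, 1]
    apply isGadgetRounding_one_of_le <;> grind [abs_le]
  rcases lt_or_ge s 2 with hs₂ | hs₂
  · use ![0, 0, 0]
    apply isGadgetRounding_one_of_le <;> grind [abs_le]
  rcases le_or_gt (2 * u 0 - s) (-2 / 3) with h₀' | h₀'
  · use ![0, 1, 1]
    apply isGadgetRounding_one_of_le <;> grind [abs_le]
  rcases le_or_gt (2 * u 1 - s) (-2 / 3) with h₁' | h₁'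
  · use ![1, 0, 1]
    apply isGadgetRounding_one_of_le <;> grind [abs_le]
  · use ![1, 1, 0]
    apply isGadgetRounding_one_of_le <;> grind [abs_le]

theorem gadget_completeness (u : Fin 3 → ℝ) (hu : ∀ i, u i ∈ Set.Icc (0 : ℝ) 1)
    (b : ℝ) (hb : b = -1 ∨ b = 1) :
    ∃ z : Fin 3 → ℝ, (∀ i, z i = 0 ∨ z i = 1) ∧
      ‖Gmat.mulVec (u - z)‖ ≤ 4 / 3 ∧
      0 ≤ b * ((u 0 + u 1 + u 2) - (z 0 + z 1 + z 2)) ∧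
      |(u 0 + u 1 + u 2) - (z 0 + z 1 + z 2)| ≤ 2 := by
  obtain ⟨z, hz, hnorm, hsign, hsum⟩ : ∃ z, IsGadgetRounding b u z := by
    rcases hb with rfl | rfl
    · have hu' : ∀ i, (1 - u) i ∈ Set.Icc (0 : ℝ) 1 := fun i => by
        simpa [and_comm] using hu i
      obtain ⟨z, hz⟩ := exists_isGadgetRounding_one hu'
      exact ⟨1 - z, hz.one_sub⟩
    · exact exists_isGadgetRounding_one hu
  have hsum_eq : ∑ i, (u - z) i = u 0 + u 1 + u 2 - (z 0 + z 1 + z 2) := by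
    simp [Fin.sum_univ_three]
  rw [hsum_eq] at hsign hsum
  exact ⟨z, hz, hnorm, hsign, hsum⟩
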